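/- Let d ≥ 2, W : ℝ^d → [0,∞) continuous, and Φ ∈ C¹(ℝ^d,ℝ^d). The following are equivalent: (i) for all u ∈ L^∞ ∩ C^∞(Ω,ℝ^d) with ∇·u = 0 one has the pointwise inequality ∇·[Φ(u)] ≤ ½|∇u|² + W(u) on Ω; (ii) |Π₀∇Φ(z)|² ≤ 2W(z) for all z ∈ ℝ^d, where Π₀ is the orthogonal projection onto traceless matrices, Π₀U = U − (Tr(U)/d) I_d. -/

import Mathlib

open MeasureTheory Filter Topology ENNReal

noncomputable section

/-- Squared Euclidean norm on `ℝ^d` (modelled as `Fin d → ℝ`). -/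
def vnorm2 {d : ℕ} (v : Fin d → ℝ) : ℝ := ∑ i, v i ^ 2

/-- Partial derivative in the `i`-th coordinate direction of a map `ℝ^d → ℝ^d`. -/
def pd {d : ℕ} (i : Fin d) (u : (Fin d → ℝ) → Fin d → ℝ) (x : Fin d → ℝ) : Fin d → ℝ :=
  fderiv ℝ u x (Pi.single i 1)

/-- Partial derivative in the `i`-th coordinate direction of a scalar function on `ℝ^d`. -/
def pdS {d : ℕ} (i : Fin d) (w : (Fin d → ℝ) → ℝ) (x : Fin d → ℝ) : ℝ :=
  fderiv ℝ w x (Pi.single i 1)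

/-- Squared Frobenius norm `|∇u|²` of the Jacobian of `u`. -/
def gradSq {d : ℕ} (u : (Fin d → ℝ) → Fin d → ℝ) (x : Fin d → ℝ) : ℝ :=
  ∑ i, ∑ j, (pd i u x j) ^ 2

/-- Divergence-free condition `∇ ⋅ u = 0`. -/
def IsDivFree {d : ℕ} (u : (Fin d → ℝ) → Fin d → ℝ) : Prop :=
  ∀ x, ∑ i, pd i u x i = 0

/-- Periodicity (period 1) in the last `d-1` coordinates: `u` is a map on `Ω = ℝ × 𝕋^{d-1}`. -/
def IsPeriodic {d : ℕ} [NeZero d] (u : (Fin d → ℝ) → Fin d → ℝ) : Prop :=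
  ∀ (x : Fin d → ℝ) (i : Fin d), i ≠ 0 → u (x + Pi.single i 1) = u x

/-- Fundamental domain `ℝ × [0,1)^{d-1}` of `Ω = ℝ × 𝕋^{d-1}`. -/
def strip (d : ℕ) [NeZero d] : Set (Fin d → ℝ) :=
  {x | ∀ i : Fin d, i ≠ 0 → x i ∈ Set.Ico (0 : ℝ) 1}

/-- The unit cube `[0,1)^d`. -/
def cube (d : ℕ) : Set (Fin d → ℝ) := Set.univ.pi fun _ => Set.Ico (0 : ℝ) 1

/-- The `x'`-average `ū(t) = ∫_{𝕋^{d-1}} u(t,x') dx'`. -/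
def avg {d : ℕ} [NeZero d] (u : (Fin d → ℝ) → Fin d → ℝ) (t : ℝ) : Fin d → ℝ :=
  ∫ y in cube d, u (Function.update y 0 t)

/-- Energy density `½|∇u|² + W(u)`. -/
def eden {d : ℕ} (W : (Fin d → ℝ) → ℝ) (u : (Fin d → ℝ) → Fin d → ℝ) (x : Fin d → ℝ) : ℝ :=
  (1 / 2) * gradSq u x + W (u x)

/-- Total energy `E(u)` on `Ω`, with values in `[0,∞]`. -/
def energy (d : ℕ) [NeZero d] (W : (Fin d → ℝ) → ℝ) (u : (Fin d → ℝ) → Fin d → ℝ) : ℝ≥0∞ :=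
  ∫⁻ x in strip d, ENNReal.ofReal (eden W u x)

/-- Membership in `Ḣ¹_div(Ω, ℝ^d)` (with classical derivatives). -/
def Adm (d : ℕ) [NeZero d] (u : (Fin d → ℝ) → Fin d → ℝ) : Prop :=
  Differentiable ℝ u ∧ IsPeriodic u ∧ IsDivFree u ∧ IntegrableOn (gradSq u) (strip d)

/-- The boundary conditions `ū(-∞) = u⁻`, `ū(+∞) = u⁺`. -/
def BdryCond (d : ℕ) [NeZero d] (u : (Fin d → ℝ) → Fin d → ℝ) (um up : Fin d → ℝ) : Prop :=
  Tendsto (avg u) atBot (𝓝 um) ∧ Tendsto (avg u) atTop (𝓝 up)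

/-- `S_a`: the zeros of `W` in the hyperplane `{z₁ = a}`. -/
def wellSet (d : ℕ) [NeZero d] (W : (Fin d → ℝ) → ℝ) (a : ℝ) : Set (Fin d → ℝ) :=
  {z | z 0 = a ∧ W z = 0}

/-- Hypothesis (H2): `liminf_{z₁ → a, |z'| → ∞} W(z₁,z') > 0`. -/
def H2cond (d : ℕ) [NeZero d] (W : (Fin d → ℝ) → ℝ) (a : ℝ) : Prop :=
  ∃ c > (0 : ℝ), ∃ δ > (0 : ℝ), ∃ R : ℝ, ∀ z : Fin d → ℝ,
    |z 0 - a| < δ → R ≤ ∑ i, (if i = (0 : Fin d) then 0 else z i ^ 2) → c ≤ W z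

/-- The `(i,j)` entry of `Π₀∇Φ(z)`, the traceless part of the Jacobian of `Φ` at `z`. -/
def pi0entry {d : ℕ} (Φ : (Fin d → ℝ) → Fin d → ℝ) (z : Fin d → ℝ) (i j : Fin d) : ℝ :=
  pd i Φ z j - (if i = j then (∑ k, pd k Φ z k) / (d : ℝ) else 0)

/-- The squared Frobenius norm `|Π₀∇Φ(z)|²`. -/
def pi0NormSq {d : ℕ} (Φ : (Fin d → ℝ) → Fin d → ℝ) (z : Fin d → ℝ) : ℝ :=
  ∑ i, ∑ j, (pi0entry Φ z i j) ^ 2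

/-!
By the chain rule `∇·[Φ(u)] = tr(∇u ∇Φ(u))`. When `∇·u = 0` the matrix `∇u` is traceless, so
`tr(∇u ∇Φ(u)) = tr(∇u Π₀∇Φ(u)) ≤ ½|∇u|² + ½|Π₀∇Φ(u)|²`, which gives (ii) ⇒ (i). The inequality is
an equality when `∇u = (Π₀∇Φ(z))ᵀ`, and every traceless matrix is the gradient at the origin of a
smooth, bounded, periodic, divergence-free field taking the value `z` there; evaluating (i) for that
field at the origin gives (ii).
-/

open Matrix

section Traceless

variable {n R : Type*} [Fintype n]

def tracelessPart [DecidableEq n] [Field R] (M : Matrix n n R) : Matrix n n R :=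
  M - (M.trace / Fintype.card n) • 1

theorem trace_tracelessPart [DecidableEq n] [Field R] [CharZero R] [Nonempty n]
    (M : Matrix n n R) : (tracelessPart M).trace = 0 := by
  simp [tracelessPart, trace_sub, trace_smul, trace_one, Fintype.card_ne_zero]

theorem trace_mul_tracelessPart [DecidableEq n] [Field R] {N : Matrix n n R} (hN : N.trace = 0)
    (M : Matrix n n R) : (N * tracelessPart M).trace = (N * M).trace := by
  simp [tracelessPart, Matrix.mul_sub, trace_sub, hN]

theorem trace_mul_transpose_self [CommSemiring R] (A : Matrix n n R) :
    (A * Aᵀ).trace = ∑ i, ∑ j, A i j ^ 2 := by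
  simp [trace, mul_apply, sq]

theorem two_mul_trace_mul_le (N P : Matrix n n ℝ) :
    2 * (N * P).trace ≤ ∑ i, ∑ j, N i j ^ 2 + ∑ i, ∑ j, P i j ^ 2 :=
  calc 2 * (N * P).trace = ∑ i, ∑ j, 2 * N i j * P j i := by
        simp [trace, mul_apply, Finset.mul_sum, mul_assoc]
    _ ≤ ∑ i, ∑ j, (N i j ^ 2 + P j i ^ 2) := by
        gcongr with i _ j _
        exact two_mul_le_add_sq _ _
    _ = ∑ i, ∑ j, N i j ^ 2 + ∑ i, ∑ j, P i j ^ 2 := by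
        simp only [Finset.sum_add_distrib]
        rw [Finset.sum_comm (f := fun i j => P j i ^ 2)]

end Traceless

section Jacobian

variable {d : ℕ}

/-- Row `i` is `∂ᵢu`: the transpose of the usual Jacobian matrix, so that
`jac (Φ ∘ u) = jac u * jac Φ`. -/
def jac (u : (Fin d → ℝ) → Fin d → ℝ) (x : Fin d → ℝ) : Matrix (Fin d) (Fin d) ℝ :=
  Matrix.of fun i j => pd i u x j

theorem gradSq_eq_sum_jac (u : (Fin d → ℝ) → Fin d → ℝ) (x : Fin d → ℝ) :
    gradSq u x = ∑ i, ∑ j, jac u x i j ^ 2 :=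
  rfl

theorem IsDivFree.trace_jac {u : (Fin d → ℝ) → Fin d → ℝ} (hu : IsDivFree u) (x : Fin d → ℝ) :
    (jac u x).trace = 0 :=
  hu x

theorem pi0NormSq_eq_sum_tracelessPart_jac (Φ : (Fin d → ℝ) → Fin d → ℝ) (z : Fin d → ℝ) :
    pi0NormSq Φ z = ∑ i, ∑ j, tracelessPart (jac Φ z) i j ^ 2 := by
  simp [pi0NormSq, pi0entry, tracelessPart, jac, trace, one_apply]

theorem jac_comp {Φ u : (Fin d → ℝ) → Fin d → ℝ} {x : Fin d → ℝ}
    (hΦ : DifferentiableAt ℝ Φ (u x)) (hu : DifferentiableAt ℝ u x) :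
    jac (fun y => Φ (u y)) x = jac u x * jac Φ (u x) := by
  ext i j
  rw [jac, of_apply, pd, fderiv_fun_comp x hΦ hu, ContinuousLinearMap.comp_apply,
    pi_eq_sum_univ' (fderiv ℝ u x (Pi.single i 1))]
  simp [jac, pd, mul_apply]

theorem sum_pd_comp_eq_trace {Φ u : (Fin d → ℝ) → Fin d → ℝ} {x : Fin d → ℝ}
    (hΦ : DifferentiableAt ℝ Φ (u x)) (hu : DifferentiableAt ℝ u x) :
    ∑ i, pd i (fun y => Φ (u y)) x i = (jac u x * jac Φ (u x)).trace := by
  rw [← jac_comp hΦ hu]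
  rfl

end Jacobian

section TestField

variable {d : ℕ} (s : ℝ → ℝ) (A : Matrix (Fin d) (Fin d) ℝ) (z : Fin d → ℝ)

/-- The diagonal of `A` is carried by a single wave in the direction `(1, …, 1)`, whose divergence
is `s' · tr A`; the remaining entries by shears `s(xᵢ) eⱼ` (`i ≠ j`), which are divergence-free. -/
def testField (x : Fin d → ℝ) : Fin d → ℝ :=
  z + s (∑ k, x k) • A.diag + ∑ i, s (x i) • (A i - A.diag)

variable {s}

theorem pd_testField (hs : Differentiable ℝ s) (x : Fin d → ℝ) (i : Fin d) :
    pd i (testField s A z) x =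
      deriv s (∑ k, x k) • A.diag + deriv s (x i) • (A i - A.diag) := by
  have hsum : HasFDerivAt (fun y : Fin d → ℝ => ∑ k, y k)
      (∑ k, ContinuousLinearMap.proj (R := ℝ) k) x :=
    HasFDerivAt.fun_sum fun k _ => hasFDerivAt_apply k x
  have hfield : HasFDerivAt (testField s A z)
      ((deriv s (∑ k, x k) • ∑ k, ContinuousLinearMap.proj (R := ℝ) k).smulRight A.diag +
        ∑ l, (deriv s (x l) • ContinuousLinearMap.proj (R := ℝ) l).smulRight (A l - A.diag)) x :=
    ((((hs _).hasDerivAt.comp_hasFDerivAt x hsum).smul_const A.diag).const_add z).add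
      (HasFDerivAt.fun_sum fun l _ =>
        ((hs _).hasDerivAt.comp_hasFDerivAt x (hasFDerivAt_apply l x)).smul_const _)
  simp [pd, hfield.fderiv, Pi.single_apply]

theorem testField_zero (hs0 : s 0 = 0) : testField s A z 0 = z := by
  simp [testField, hs0]

theorem jac_testField_zero (hs : Differentiable ℝ s) (hs0 : deriv s 0 = 1) :
    jac (testField s A z) 0 = A := by
  ext i j
  simp [jac, pd_testField A z hs, hs0]

theorem isDivFree_testField (hs : Differentiable ℝ s) (hA : A.trace = 0) :
    IsDivFree (testField s A z) := by
  intro x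
  simp only [pd_testField A z hs, Pi.add_apply, Pi.smul_apply, Pi.sub_apply, diag_apply,
    sub_self, smul_eq_mul, mul_zero, add_zero, ← Finset.mul_sum]
  exact mul_eq_zero_of_right _ hA

theorem isPeriodic_testField [NeZero d] (hs : Function.Periodic s 1) :
    IsPeriodic (testField s A z) := by
  intro x i _
  have hcoord : ∀ l, s (x l + (Pi.single i 1 : Fin d → ℝ) l) = s (x l) := by
    intro l
    by_cases hl : l = i
    · subst hl
      simp [hs (x l)]
    · simp [hl]
  simp [testField, hcoord, Finset.sum_add_distrib, hs (∑ k, x k)]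

theorem contDiff_testField {n : WithTop ℕ∞} (hs : ContDiff ℝ n s) :
    ContDiff ℝ n (testField s A z) := by
  unfold testField
  fun_prop

theorem exists_bound_testField {C : ℝ} (hs : ∀ t, ‖s t‖ ≤ C) :
    ∃ M, ∀ x, ‖testField s A z x‖ ≤ M := by
  refine ⟨‖z‖ + C * ‖A.diag‖ + ∑ i, C * ‖A i - A.diag‖, fun x => ?_⟩
  have hterm : ∀ t (v : Fin d → ℝ), ‖s t • v‖ ≤ C * ‖v‖ := fun t v =>
    (norm_smul_le _ _).trans (mul_le_mul_of_nonneg_right (hs t) (norm_nonneg v))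
  calc ‖testField s A z x‖
      ≤ ‖z‖ + ‖s (∑ k, x k) • A.diag‖ + ∑ i, ‖s (x i) • (A i - A.diag)‖ :=
        (norm_add_le _ _).trans (add_le_add (norm_add_le _ _) (norm_sum_le _ _))
    _ ≤ ‖z‖ + C * ‖A.diag‖ + ∑ i, C * ‖A i - A.diag‖ := by
        gcongr with i
        · exact hterm _ _
        · exact hterm _ _

end TestField

def sinProfile (t : ℝ) : ℝ := Real.sin (2 * Real.pi * t) / (2 * Real.pi)

theorem hasDerivAt_sinProfile (t : ℝ) :
    HasDerivAt sinProfile (Real.cos (2 * Real.pi * t)) t := by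
  have h := ((hasDerivAt_id t).const_mul (2 * Real.pi)).sin.div_const (2 * Real.pi)
  rwa [mul_one, mul_div_cancel_right₀ _ Real.two_pi_pos.ne'] at h

theorem contDiff_sinProfile : ContDiff ℝ (⊤ : ℕ∞) sinProfile := by
  unfold sinProfile
  fun_prop

theorem periodic_sinProfile : Function.Periodic sinProfile 1 := fun t => by
  simp [sinProfile, mul_add, Real.sin_add_two_pi]

theorem norm_sinProfile_le (t : ℝ) : ‖sinProfile t‖ ≤ 1 := by
  rw [sinProfile, norm_div, Real.norm_eq_abs, Real.norm_of_nonneg Real.two_pi_pos.le,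
    div_le_one Real.two_pi_pos]
  linarith [Real.abs_sin_le_one (2 * Real.pi * t), Real.pi_gt_three]

theorem exists_bounded_periodic_divFree_jac_eq {d : ℕ} [NeZero d]
    {A : Matrix (Fin d) (Fin d) ℝ} (hA : A.trace = 0) (z : Fin d → ℝ) :
    ∃ u : (Fin d → ℝ) → Fin d → ℝ, ContDiff ℝ (⊤ : ℕ∞) u ∧ (∃ M, ∀ x, ‖u x‖ ≤ M) ∧
      IsPeriodic u ∧ IsDivFree u ∧ u 0 = z ∧ jac u 0 = A := by
  have hdiff : Differentiable ℝ sinProfile := fun t => (hasDerivAt_sinProfile t).differentiableAt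
  have hderiv0 : deriv sinProfile 0 = 1 := by simp [(hasDerivAt_sinProfile 0).deriv]
  exact ⟨testField sinProfile A z, contDiff_testField A z contDiff_sinProfile,
    exists_bound_testField A z norm_sinProfile_le, isPeriodic_testField A z periodic_sinProfile,
    isDivFree_testField A z hdiff hA, testField_zero A z (by simp [sinProfile]),
    jac_testField_zero A z hdiff hderiv0⟩

theorem statement17_general (d : ℕ) [NeZero d]
    (W : (Fin d → ℝ) → ℝ)
    (Φ : (Fin d → ℝ) → Fin d → ℝ) (hΦ : ContDiff ℝ 1 Φ) :
    (∀ u : (Fin d → ℝ) → Fin d → ℝ, ContDiff ℝ (⊤ : ℕ∞) u → (∃ M, ∀ x, ‖u x‖ ≤ M) →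
      IsPeriodic u → IsDivFree u →
      ∀ x, (∑ i, pd i (fun y => Φ (u y)) x i) ≤ (1 / 2) * gradSq u x + W (u x)) ↔
    (∀ z, pi0NormSq Φ z ≤ 2 * W z) := by
  have hchain : ∀ u : (Fin d → ℝ) → Fin d → ℝ, ContDiff ℝ (⊤ : ℕ∞) u → ∀ x,
      ∑ i, pd i (fun y => Φ (u y)) x i = (jac u x * jac Φ (u x)).trace := fun u hu x =>
    sum_pd_comp_eq_trace ((hΦ.differentiable one_ne_zero) _) ((hu.differentiable (by simp)) x)
  constructor
  · intro h z
    set A := (tracelessPart (jac Φ z))ᵀ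
    have hA : A.trace = 0 := by rw [trace_transpose, trace_tracelessPart]
    obtain ⟨u, hu, hbdd, hper, hdivFree, hu0, hju0⟩ := exists_bounded_periodic_divFree_jac_eq hA z
    have key := h u hu hbdd hper hdivFree 0
    have hnorm : ∑ i, ∑ j, A i j ^ 2 = pi0NormSq Φ z := by
      rw [pi0NormSq_eq_sum_tracelessPart_jac, Finset.sum_comm]
      rfl
    rw [hchain u hu, hu0, hju0, ← trace_mul_tracelessPart hA, ← transpose_transpose
      (tracelessPart _), trace_mul_transpose_self, gradSq_eq_sum_jac, hju0, hnorm] at key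
    linarith
  · intro h u hu _ _ hdivFree x
    have hW := pi0NormSq_eq_sum_tracelessPart_jac Φ (u x) ▸ h (u x)
    have hAMGM := two_mul_trace_mul_le (jac u x) (tracelessPart (jac Φ (u x)))
    rw [hchain u hu, ← trace_mul_tracelessPart (hdivFree.trace_jac x), gradSq_eq_sum_jac]
    linarith

/-- Proposition `criterium_strong`: for `Φ ∈ C¹(ℝ^d,ℝ^d)`, the pointwise
estimate `∇·[Φ(u)] ≤ ½|∇u|² + W(u)` for all smooth bounded divergence-free maps `u` on `Ω`
is equivalent to the pointwise condition `|Π₀∇Φ(z)|² ≤ 2W(z)` for all `z ∈ ℝ^d`. -/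
theorem statement17 (d : ℕ) [NeZero d] (hd : 2 ≤ d)
    (W : (Fin d → ℝ) → ℝ) (hWc : Continuous W) (hWnn : ∀ z, 0 ≤ W z)
    (Φ : (Fin d → ℝ) → Fin d → ℝ) (hΦ : ContDiff ℝ 1 Φ) :
    (∀ u : (Fin d → ℝ) → Fin d → ℝ, ContDiff ℝ (⊤ : ℕ∞) u → (∃ M, ∀ x, ‖u x‖ ≤ M) →
      IsPeriodic u → IsDivFree u →
      ∀ x, (∑ i, pd i (fun y => Φ (u y)) x i) ≤ (1 / 2) * gradSq u x + W (u x)) ↔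
    (∀ z, pi0NormSq Φ z ≤ 2 * W z) :=
  statement17_general d W Φ hΦ
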